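/- arXiv:1112.2100 — 2 statements merged into one kernel-verified Lean document; each statement's English description precedes it below -/
import Mathlib

section
/- For all n, Σ_{k=0}^n C(n,k) ℰ_k^{(α)}(0) 𝒢_{n-k}^{(α)}(x + x₁) = Σ_{k=0}^n C(n,k) ℰ_k^{(α)}(x) 𝒢_{n-k}^{(α)}(x₁). -/
/-- Series of `e^{xt}` : coefficients `x^n/n!`. -/
noncomputable def expS (x : ℝ) : PowerSeries ℝ :=
  PowerSeries.mk fun n => x ^ n / n.factorial

/-- Series of `e^{t} + e^{-t}` : coefficients `(1+(-1)^n)/n!`. -/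
noncomputable def coshS : PowerSeries ℝ :=
  PowerSeries.mk fun n => (1 + (-1 : ℝ) ^ n) / n.factorial

/-- Series of `e^{y t^j}` : coefficients `y^{n/j}/(n/j)!` when `j ∣ n`. -/
noncomputable def expTail (j : ℕ) (y : ℝ) : PowerSeries ℝ :=
  PowerSeries.mk fun n => if j ∣ n then y ^ (n / j) / (n / j).factorial else 0

/-!
Both sides are `n!` times the `n`-th coefficient of a product of two exponential generating
functions. Multiplying either product by `coshS ^ (2α)` gives `2^α (2t)^α e^{(x + x₁) t}`,
and power series over `ℝ` form a domain, so the two products agree.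
-/

open PowerSeries Finset Nat

theorem factorial_mul_coeff_mk_div_factorial_mul {K : Type*} [Field K] [CharZero K]
    (f g : ℕ → K) (n : ℕ) :
    n ! * coeff n (mk (fun k => f k / k !) * mk (fun k => g k / k !)) =
      ∑ k ∈ range (n + 1), (n.choose k : K) * f k * g (n - k) := by
  rw [coeff_mul, Nat.sum_antidiagonal_eq_sum_range_succ_mk, mul_sum]
  refine sum_congr rfl fun k hk => ?_
  rw [Nat.cast_choose K (Nat.lt_succ_iff.mp (mem_range.mp hk))]
  simp only [coeff_mk]
  field_simp

theorem expS_eq_rescale_exp (x : ℝ) : expS x = rescale x (exp ℝ) := by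
  ext n
  simp [expS, coeff_rescale, coeff_exp, div_eq_mul_inv]

theorem expS_mul_expS (x y : ℝ) : expS x * expS y = expS (x + y) := by
  simp only [expS_eq_rescale_exp, exp_mul_exp_eq_exp_add]

theorem coshS_ne_zero : coshS ≠ 0 := by
  intro h
  have h0 : constantCoeff coshS = 2 := by norm_num [coshS]
  simp [h] at h0

theorem mul_eq_mul_of_mul_eq_mul_expS {c a b : PowerSeries ℝ} (hc : c ≠ 0)
    {F H : ℝ → PowerSeries ℝ} (hF : ∀ x, c * F x = a * expS x) (hH : ∀ x, c * H x = b * expS x)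
    {x y x' y' : ℝ} (h : x + y = x' + y') : F x * H y = F x' * H y' := by
  have key : ∀ u v, c * c * (F u * H v) = a * b * expS (u + v) := fun u v => by
    rw [← expS_mul_expS, ← mul_mul_mul_comm, hF, hH]
    ring
  exact mul_left_cancel₀ (mul_ne_zero hc hc) (by rw [key, key, h])

theorem euler_genocchi_convolution (E : ℕ → ℕ → ℝ → ℝ) (G : ℕ → ℕ → ℝ → ℝ)
    (hE : ∀ (α : ℕ) (x : ℝ),
      coshS ^ α * PowerSeries.mk (fun n => E α n x / n.factorial) = 2 ^ α * expS x)
    (hG : ∀ (α : ℕ) (x : ℝ),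
      coshS ^ α * PowerSeries.mk (fun n => G α n x / n.factorial) =
        (2 * PowerSeries.X) ^ α * expS x) :
    ∀ (α n : ℕ) (x x₁ : ℝ),
      ∑ k ∈ Finset.range (n + 1), (n.choose k : ℝ) * E α k 0 * G α (n - k) (x + x₁) =
      ∑ k ∈ Finset.range (n + 1), (n.choose k : ℝ) * E α k x * G α (n - k) x₁ := by
  intro α n x x₁
  have h := mul_eq_mul_of_mul_eq_mul_expS (pow_ne_zero α coshS_ne_zero) (hE α) (hG α)
    (zero_add (x + x₁))
  have hn := congrArg (fun p => (n ! : ℝ) * coeff n p) h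
  simpa only [factorial_mul_coeff_mk_div_factorial_mul] using hn
end

section
/- For an integer j ≥ 2, the function F(x,y) = H_n^{(j)}(x,y) satisfies the generalized heat equation ∂F/∂y = ∂^j F/∂x^j with initial condition F(x,0) = x^n. -/
/-- The Gould-Hopper polynomial given by its explicit formula. -/
noncomputable def gouldHopper (j n : ℕ) (x y : ℝ) : ℝ :=
  n.factorial * ∑ r ∈ Finset.range (n / j + 1),
    x ^ (n - j * r) * y ^ r / (r.factorial * (n - j * r).factorial)

/-!
Write `H_n^{(j)}(x, y) = n! ∑_r (y^r / r!) (x^(n-jr) / (n-jr)!)`. Differentiation `k` times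
shifts a divided power `t^m / m!` to `t^(m-k) / (m-k)!` (or kills it when `k > m`), so `∂/∂y`
lowers `r` by one while `∂^j/∂x^j` lowers `n - jr` by `j`. Both operators therefore send
`H_n^{(j)}` to the same polynomial `n!/(n-j)! · H_{n-j}^{(j)}`. At `y = 0` only the term
`r = 0`, namely `x^n`, survives.
-/

open Finset

theorem iteratedDeriv_pow_div_factorial {𝕜 : Type*} [NontriviallyNormedField 𝕜] [CharZero 𝕜]
    (k m : ℕ) (x : 𝕜) :
    iteratedDeriv k (fun x : 𝕜 => x ^ m / m.factorial) x =
      if k ≤ m then x ^ (m - k) / (m - k).factorial else 0 := by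
  rw [iteratedDeriv_div_const, iteratedDeriv_pow]
  split_ifs with hkm
  · have hdesc : (m.descFactorial k : 𝕜) ≠ 0 := by
      exact_mod_cast (Nat.descFactorial_pos.mpr hkm).ne'
    rw [← Nat.factorial_mul_descFactorial hkm, Nat.cast_mul]
    field_simp
  · simp [Nat.descFactorial_eq_zero_iff_lt.mpr (not_le.mp hkm)]

theorem gouldHopper_eq_sum (j n : ℕ) (x y : ℝ) :
    gouldHopper j n x y = n.factorial * ∑ r ∈ range (n / j + 1),
      y ^ r / r.factorial * (x ^ (n - j * r) / (n - j * r).factorial) := by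
  unfold gouldHopper
  congr 1
  refine sum_congr rfl fun r _ => ?_
  rw [div_mul_div_comm, mul_comm (y ^ r)]

theorem gouldHopper_zero_right (j n : ℕ) (x : ℝ) : gouldHopper j n x 0 = x ^ n := by
  rw [gouldHopper_eq_sum, sum_range_succ', sum_eq_zero fun r _ => by simp]
  simp [mul_div_cancel₀, Nat.factorial_ne_zero]

theorem descFactorial_mul_gouldHopper_sub {j : ℕ} (hj : 0 < j) (n : ℕ) (x y : ℝ) :
    n.descFactorial j * gouldHopper j (n - j) x y = n.factorial * ∑ r ∈ range (n / j),
      y ^ r / r.factorial * (x ^ (n - j * (r + 1)) / (n - j * (r + 1)).factorial) := by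
  rcases lt_or_ge n j with hnj | hjn
  · simp [Nat.descFactorial_eq_zero_iff_lt.mpr hnj, Nat.div_eq_of_lt hnj]
  have hsub : ∀ r, n - j - j * r = n - j * (r + 1) := fun r => by
    rw [Nat.sub_sub, mul_add_one, add_comm]
  rw [gouldHopper_eq_sum, ← Nat.div_eq_sub_div hj hjn, ← Nat.factorial_mul_descFactorial hjn]
  simp_rw [hsub]
  push_cast
  ring

theorem deriv_gouldHopper_right {j : ℕ} (hj : 0 < j) (n : ℕ) (x y : ℝ) :
    deriv (gouldHopper j n x ·) y = n.descFactorial j * gouldHopper j (n - j) x y := by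
  rw [descFactorial_mul_gouldHopper_sub hj]
  simp_rw [gouldHopper_eq_sum]
  rw [deriv_const_mul_field, deriv_fun_sum fun r _ => by fun_prop]
  simp_rw [deriv_mul_const_field, ← iteratedDeriv_one, iteratedDeriv_pow_div_factorial]
  rw [sum_range_succ']
  simp

theorem iteratedDeriv_gouldHopper_left {j : ℕ} (hj : 0 < j) (n : ℕ) (x y : ℝ) :
    iteratedDeriv j (gouldHopper j n · y) x = n.descFactorial j * gouldHopper j (n - j) x y := by
  rw [descFactorial_mul_gouldHopper_sub hj]
  simp_rw [gouldHopper_eq_sum]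
  rw [iteratedDeriv_const_mul_field, iteratedDeriv_fun_sum fun r _ => by fun_prop]
  simp_rw [iteratedDeriv_const_mul_field, iteratedDeriv_pow_div_factorial]
  -- the top term `r = n / j` has `x`-degree `n % j < j`
  rw [sum_range_succ]
  have hlast : ¬ j ≤ n - j * (n / j) := by
    have := Nat.mod_add_div n j
    have := Nat.mod_lt n hj
    omega
  rw [if_neg hlast, mul_zero, add_zero]
  refine congrArg _ (sum_congr rfl fun r hr => ?_)
  have hle : j * (r + 1) ≤ n := by
    rw [mul_comm]
    exact (Nat.le_div_iff_mul_le hj).mp (mem_range.mp hr)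
  rw [mul_add_one] at hle
  rw [if_pos (by omega), Nat.sub_sub, ← mul_add_one]

theorem gould_hopper_heat_equation (j n : ℕ) (hj : 2 ≤ j) :
    (∀ x y : ℝ,
      deriv (fun y' => gouldHopper j n x y') y =
        iteratedDeriv j (fun x' => gouldHopper j n x' y) x) ∧
    ∀ x : ℝ, gouldHopper j n x 0 = x ^ n := by
  have hj0 : 0 < j := by omega
  exact ⟨fun x y => by rw [deriv_gouldHopper_right hj0, iteratedDeriv_gouldHopper_left hj0],
    gouldHopper_zero_right j n⟩
end
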